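/- arXiv:1608.01407 — 2 statements merged into one kernel-verified Lean document; each statement's English description precedes it below -/
import Mathlib

section
/- Every finitely generated residually finite group is Hopfian: every surjective endomorphism is an automorphism. -/
/-- Malcev: a finitely generated residually finite group is Hopfian. -/
theorem fg_residually_finite_implies_hopfian (G : Type*) [Group G] [Group.FG G]
    (hrf : ∀ g : G, g ≠ 1 → ∃ N : Subgroup G, N.Normal ∧ N.index ≠ 0 ∧ g ∉ N) :
    ∀ f : G →* G, Function.Surjective f → Function.Injective f := by
  intro f hf
  rw [injective_iff_map_eq_one]
  intro g hg
  by_contra hg1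
  obtain ⟨N, hN, hidx, hgN⟩ := hrf g hg1
  haveI := hN
  haveI : N.FiniteIndex := ⟨hidx⟩
  set φ : G →* G ⧸ N := QuotientGroup.mk' N with hφ
  -- iterates of f
  let fn : ℕ → (G →* G) := fun n => Nat.rec (MonoidHom.id G) (fun _ h => f.comp h) n
  have hfn_succ : ∀ n, fn (n + 1) = f.comp (fn n) := fun n => rfl
  have hfn_add : ∀ a b, fn (a + b) = (fn a).comp (fn b) := by
    intro a b
    induction a with
    | zero => simp [fn]
    | succ a ih =>
      have : a + 1 + b = (a + b) + 1 := by omega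
      rw [this, hfn_succ, ih, hfn_succ, MonoidHom.comp_assoc]
  have hfn_surj : ∀ n, Function.Surjective (fn n) := by
    intro n
    induction n with
    | zero => exact Function.surjective_id
    | succ n ih => exact hf.comp ih
  -- finitely many homs G →* G ⧸ N
  obtain ⟨S, hSc, hSf⟩ := Group.fg_iff.mp ‹Group.FG G›
  haveI : Finite S := hSf.to_subtype
  have hfin : Finite (G →* G ⧸ N) := by
    have hinj : Function.Injective (fun (h : G →* G ⧸ N) => (fun s : S => h s)) := by
      intro h1 h2 he
      exact MonoidHom.eq_of_eqOn_dense hSc fun x hx => congrFun he ⟨x, hx⟩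
    exact Finite.of_injective _ hinj
  -- pigeonhole
  obtain ⟨i, j, hij, hEq⟩ :=
    Finite.exists_ne_map_eq_of_infinite (fun n : ℕ => φ.comp (fn n))
  wlog hlt : i < j generalizing i j
  · exact this j i hij.symm hEq.symm (by omega)
  have hk : j = (j - i) + i := by omega
  have h1 : φ.comp (fn i) = (φ.comp (fn (j - i))).comp (fn i) := by
    have := hEq
    rw [hk, hfn_add, ← MonoidHom.comp_assoc] at this
    exact this
  have h2 : φ = φ.comp (fn (j - i)) := (MonoidHom.cancel_right (hfn_surj i)).mp h1
  -- evaluate at g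
  have hfng : fn (j - i) g = 1 := by
    have hall : ∀ n, fn (n + 1) g = 1 := by
      intro n
      rw [hfn_add n 1]
      simp [fn, hg]
    have hji : j - i = (j - i - 1) + 1 := by omega
    rw [hji]
    exact hall _
  have : φ g = 1 := by
    rw [h2]
    simp [hfng]
  exact hgN ((QuotientGroup.eq_one_iff g).mp this)
end

section
/- Let G = ℤ² ⋊ ℤ where the generator t of ℤ acts on ℤ² = ⟨x⟩ × ⟨y⟩ by t·x·t⁻¹ = x⁻¹ and t·y·t⁻¹ = y (the flat 3-manifold group B₁). Let A be the subgroup generated by t and y. Then N_G(A) = A, but Comm_G(A) = G. -/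
/-- The automorphism `(m, n) ↦ (−m, n)` of `ℤ²` (written multiplicatively). -/
def negFirst : MulAut (Multiplicative (ℤ × ℤ)) :=
  AddEquiv.toMultiplicative ((AddEquiv.neg ℤ).prodCongr (AddEquiv.refl ℤ))

/-- The action of `ℤ = ⟨t⟩` on `ℤ²` with `t·x·t⁻¹ = x⁻¹`, `t·y·t⁻¹ = y`. -/
def B1act : Multiplicative ℤ →* MulAut (Multiplicative (ℤ × ℤ)) :=
  zpowersHom _ negFirst

/-- The flat 3-manifold group `B₁ = ℤ² ⋊ ℤ`. -/
abbrev B1 := SemidirectProduct (Multiplicative (ℤ × ℤ)) (Multiplicative ℤ) B1act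

/-! The subgroup `A = ⟨t, y⟩` consists of the elements `(m, n; k)` with `m = 0`, and conjugating
`t` by `(m, n; k)` gives an element with first coordinate `2m`, which lies in `A` only if `m = 0`.
On the other hand the elements of `A` with even `k` are central, so the centre is a normal
subgroup of finite index in `A`, and a subgroup commensurable with a normal subgroup is
commensurable with each of its conjugates. -/

open SemidirectProduct Multiplicative

theorem Subgroup.Commensurable.commensurator_eq_top_of_normal_le {G : Type*} [Group G]
    {N H : Subgroup G} [hN : N.Normal] (hNH : N ≤ H) (hfin : N.relIndex H ≠ 0) :
    Subgroup.Commensurable.commensurator H = ⊤ := by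
  have hcomm : N.Commensurable H := ⟨hfin, by simp [Subgroup.relIndex_eq_one.2 hNH]⟩
  refine eq_top_iff.2 fun g _ => ?_
  have hconj := (hcomm.conj (ConjAct.toConjAct g)).symm
  rw [hN.conjAct] at hconj
  exact hconj.trans hcomm

namespace B1

lemma toAdd_negFirst (a : Multiplicative (ℤ × ℤ)) :
    toAdd (negFirst a) = (-(toAdd a).1, (toAdd a).2) := rfl

lemma negFirst_mul_self : negFirst * negFirst = 1 := by
  ext a : 1
  apply toAdd.injective
  simp [toAdd_negFirst]

lemma toAdd_B1act (k : Multiplicative ℤ) (a : Multiplicative (ℤ × ℤ)) :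
    toAdd (B1act k a) = ((toAdd k).negOnePow * (toAdd a).1, (toAdd a).2) := by
  change toAdd ((negFirst ^ toAdd k) a) = _
  induction toAdd k using Int.induction_on generalizing a with
  | zero => simp
  | succ i ih =>
    rw [zpow_add_one, MulAut.mul_apply, ih, toAdd_negFirst, Int.negOnePow_succ]
    simp
  | pred i ih =>
    rw [zpow_sub_one, inv_eq_of_mul_eq_one_left negFirst_mul_self, MulAut.mul_apply, ih,
      toAdd_negFirst, Int.negOnePow_sub, Int.negOnePow_one]
    simp

lemma toAdd_B1act_symm (k : Multiplicative ℤ) (a : Multiplicative (ℤ × ℤ)) :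
    toAdd ((B1act k).symm a) = ((toAdd k).negOnePow * (toAdd a).1, (toAdd a).2) := by
  rw [← MulAut.inv_apply, ← map_inv, toAdd_B1act, toAdd_inv, Int.negOnePow_neg]

def t : B1 := inr (ofAdd 1)

def y : B1 := inl (ofAdd (0, 1))

def fstZeroSubgroup : Subgroup B1 where
  carrier := {g | (toAdd g.left).1 = 0}
  one_mem' := rfl
  mul_mem' {a b} ha hb := by simp_all [toAdd_B1act]
  inv_mem' {a} ha := by simp_all [toAdd_B1act_symm]

lemma mem_fstZeroSubgroup {g : B1} : g ∈ fstZeroSubgroup ↔ (toAdd g.left).1 = 0 := Iff.rfl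

lemma toAdd_left_of_mem_fstZeroSubgroup {g : B1} (hg : g ∈ fstZeroSubgroup) :
    toAdd g.left = (0, (toAdd g.left).2) :=
  Prod.ext hg rfl

lemma closure_t_y : Subgroup.closure {t, y} = fstZeroSubgroup := by
  refine le_antisymm ((Subgroup.closure_le _).2 ?_) fun g hg => ?_
  · rintro g (rfl | rfl) <;> rfl
  · have hleft : inl g.left = y ^ (toAdd g.left).2 := by
      rw [y, ← map_zpow]
      congr 1
      apply toAdd.injective
      simpa using toAdd_left_of_mem_fstZeroSubgroup hg
    have hright : inr g.right = t ^ toAdd g.right := by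
      rw [t, ← map_zpow, ← ofAdd_zsmul, smul_eq_mul, mul_one, ofAdd_toAdd]
    rw [← inl_left_mul_inr_right g, hleft, hright]
    exact mul_mem (zpow_mem (Subgroup.subset_closure (by simp)) _)
      (zpow_mem (Subgroup.subset_closure (by simp)) _)

lemma toAdd_left_conj_t_fst (g : B1) :
    (toAdd (g * t * g⁻¹).left).1 = 2 * (toAdd g.left).1 := by
  simp [t, toAdd_B1act, toAdd_B1act_symm, ← mul_assoc, ← Units.val_mul, Int.units_mul_self]
  ring

lemma normalizer_fstZeroSubgroup :
    Subgroup.normalizer (fstZeroSubgroup : Set B1) = fstZeroSubgroup := by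
  refine le_antisymm (fun g hg => ?_) Subgroup.le_normalizer
  have hconj : g * t * g⁻¹ ∈ fstZeroSubgroup := (Subgroup.mem_normalizer_iff.1 hg t).1 rfl
  rw [mem_fstZeroSubgroup, toAdd_left_conj_t_fst] at hconj
  exact mem_fstZeroSubgroup.2 (by omega)

def rightParity : B1 →* ℤˣ := (zpowersHom ℤˣ (-1)).comp rightHom

lemma mem_center_of_mem_ker_rightParity {g : B1} (hg : g ∈ fstZeroSubgroup)
    (hpar : rightParity g = 1) : g ∈ Subgroup.center B1 := by
  rw [Subgroup.mem_center_iff]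
  intro h
  ext : 1
  · apply toAdd.injective
    change Int.negOnePow (toAdd g.right) = 1 at hpar
    simp only [mul_left, toAdd_mul, toAdd_B1act, mem_fstZeroSubgroup.1 hg, mul_zero, hpar,
      Units.val_one, one_mul, Prod.mk.eta]
    rw [← toAdd_left_of_mem_fstZeroSubgroup hg, add_comm]
  · simp [mul_comm]

lemma center_relIndex_fstZeroSubgroup_ne_zero :
    (Subgroup.center B1).relIndex fstZeroSubgroup ≠ 0 := by
  have hle : rightParity.ker ⊓ fstZeroSubgroup ≤ Subgroup.center B1 :=
    fun g hg => mem_center_of_mem_ker_rightParity hg.2 hg.1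
  have : rightParity.ker.FiniteIndex := Subgroup.finiteIndex_ker _
  have hker : (rightParity.ker ⊓ fstZeroSubgroup).relIndex fstZeroSubgroup ≠ 0 := by
    rw [Subgroup.inf_relIndex_right]
    exact Subgroup.isFiniteRelIndex_of_finiteIndex.relIndex_ne_zero
  exact ne_zero_of_dvd_ne_zero hker (Subgroup.relIndex_dvd_of_le_left _ hle)

end B1

/-- In `B₁`, the subgroup `A = ⟨t, y⟩` is its own normalizer, but its commensurator
is the whole group. -/
theorem B1_normalizer_eq_self_commensurator_top :
    letI t : B1 := SemidirectProduct.inr (Multiplicative.ofAdd (1 : ℤ))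
    letI y : B1 := SemidirectProduct.inl (Multiplicative.ofAdd ((0, 1) : ℤ × ℤ))
    letI A : Subgroup B1 := Subgroup.closure {t, y}
    Subgroup.normalizer (A : Set B1) = A ∧ Subgroup.Commensurable.commensurator A = ⊤ := by
  change Subgroup.normalizer (Subgroup.closure {B1.t, B1.y} : Set B1) =
      Subgroup.closure {B1.t, B1.y} ∧
    Subgroup.Commensurable.commensurator (Subgroup.closure {B1.t, B1.y}) = ⊤
  have hnorm := B1.normalizer_fstZeroSubgroup
  rw [B1.closure_t_y]
  refine ⟨hnorm, Subgroup.Commensurable.commensurator_eq_top_of_normal_le ?_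
    B1.center_relIndex_fstZeroSubgroup_ne_zero⟩
  exact hnorm ▸ Subgroup.center_le_normalizer _
end
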